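/- arXiv:1608.00259 — 2 statements merged into one kernel-verified Lean document; each statement's English description precedes it below -/
import Mathlib

section
/- Let A be a finite abelian group. Then d(Dih(A)) = d(A) + 1. -/
/-- An *intersection subgroup* of `G`: an intersection of a nonempty
collection of maximal subgroups of `G`. -/
def IsIntersectionSubgroup {G : Type*} [Group G] (I : Subgroup G) : Prop :=
  ∃ 𝒩 : Set (Subgroup G), 𝒩.Nonempty ∧ (∀ M ∈ 𝒩, IsCoatom M) ∧ I = sInf 𝒩

/-- `⌈P⌉`: the intersection of all maximal subgroups of `G` containing `P`
(the smallest intersection subgroup containing a non-generating set `P`). -/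
def interCeil {G : Type*} [Group G] (P : Set G) : Subgroup G :=
  sInf {M : Subgroup G | IsCoatom M ∧ P ⊆ (M : Set G)}

/-- The *deficiency* `δ(P)` of a subset `P ⊆ G`: the minimum size of a
finite subset `Q ⊆ G` with `⟨P ∪ Q⟩ = G`. -/
noncomputable def deficiency {G : Type*} [Group G] (P : Set G) : ℕ :=
  sInf {n : ℕ | ∃ Q : Finset G, Q.card = n ∧ Subgroup.closure (P ∪ ↑Q) = ⊤}

/-- `d(G)`: the minimum size of a generating set of `G`. -/
noncomputable def minGen (G : Type*) [Group G] : ℕ :=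
  sInf {n : ℕ | ∃ S : Finset G, S.card = n ∧ Subgroup.closure (S : Set G) = ⊤}

open Classical in
/-- The nim-number of a position `P` in the achievement game `GEN(G)`:
positions generating `G` are terminal (they have no options, so their
nim-number is `mex ∅ = 0`); the options of a non-generating position `P`
are the positions `P ∪ {g}` for `g ∈ G \ P`, and
`nim(P) = mex {nim(P ∪ {g}) | g ∈ G \ P}` is the least natural number
that is not the nim-number of an option of `P`. -/
noncomputable def gameNim {G : Type*} [Group G] [Fintype G] (P : Set G) : ℕ :=
  if Subgroup.closure P = ⊤ then 0
  else sInf {n : ℕ | ∀ g ∉ P, n ≠ gameNim (insert g P)}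
termination_by Fintype.card G - P.ncard
decreasing_by
  have h1 : (insert g P).ncard = P.ncard + 1 :=
    Set.ncard_insert_of_notMem ‹g ∉ P› (Set.toFinite P)
  have h2 : (insert g P).ncard ≤ Fintype.card G := by
    have := Set.ncard_le_ncard (Set.subset_univ (insert g P)) (Set.toFinite _)
    simpa [Set.ncard_univ, Nat.card_eq_fintype_card] using this
  omega

/-- The homomorphism `C₂ → Aut A` sending the nontrivial element of `C₂`
to the inversion automorphism `a ↦ a⁻¹` of the abelian group `A`. -/
def dihTwist (A : Type*) [CommGroup A] : Multiplicative (ZMod 2) →* MulAut A where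
  toFun k := if (Multiplicative.toAdd k) = 0 then 1 else MulEquiv.inv A
  map_one' := by simp
  map_mul' := by
    intro a b
    have hinv : (MulEquiv.inv A) * (MulEquiv.inv A) = 1 := by
      ext x
      simp
    have hcases : ∀ x : ZMod 2, x = 0 ∨ x = 1 := by decide
    have h11 : (1 : ZMod 2) + 1 = 0 := by decide
    have hab : Multiplicative.toAdd (a * b)
        = Multiplicative.toAdd a + Multiplicative.toAdd b := rfl
    rcases hcases (Multiplicative.toAdd a) with h1 | h1 <;>
      rcases hcases (Multiplicative.toAdd b) with h2 | h2 <;>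
      simp [hab, h1, h2, hinv, h11]

/-- The generalized dihedral group `Dih(A) = C₂ ⋉ A`: the semidirect product
in which the nontrivial element of `C₂` acts on the abelian group `A` by
inversion. -/
abbrev Dih (A : Type*) [CommGroup A] :=
  SemidirectProduct A (Multiplicative (ZMod 2)) (dihTwist A)

/-- The natural inclusion `A ↪ Dih(A)`, identifying `A` with a normal
subgroup of index 2 of `Dih(A)`. -/
abbrev DihInl (A : Type*) [CommGroup A] : A →* Dih A := SemidirectProduct.inl

/-- `Dih A` is in bijection with `A × C₂`. -/
def dihEquivProd (A : Type*) [CommGroup A] : Dih A ≃ A × Multiplicative (ZMod 2) where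
  toFun x := (x.left, x.right)
  invFun p := ⟨p.1, p.2⟩
  left_inv _ := rfl
  right_inv _ := rfl

instance (A : Type*) [CommGroup A] [Fintype A] : Fintype (Dih A) :=
  Fintype.ofEquiv _ (dihEquivProd A).symm

section Aux

variable {A : Type*} [CommGroup A]

lemma dihTwist_apply (k : Multiplicative (ZMod 2)) (a : A) :
    dihTwist A k a = if Multiplicative.toAdd k = 0 then a else a⁻¹ := by
  show (if Multiplicative.toAdd k = 0 then (1 : MulAut A) else MulEquiv.inv A) a = _
  by_cases h : Multiplicative.toAdd k = 0 <;> simp [h]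

lemma zmod2_cases : ∀ z : ZMod 2, z = 0 ∨ z = 1 := by decide

/-- The subgroup `B ∪ B·(c,1)` of `Dih A`, for `B ≤ A`. -/
def dihSub (B : Subgroup A) (c : A) : Subgroup (Dih A) where
  carrier := {x | if Multiplicative.toAdd x.right = 0 then x.left ∈ B
      else x.left * c⁻¹ ∈ B}
  one_mem' := by
    simpa using one_mem B
  mul_mem' := by
    intro x y hx hy
    simp only [Set.mem_setOf_eq, SemidirectProduct.mul_left, SemidirectProduct.mul_right,
      dihTwist_apply, toAdd_mul] at hx hy ⊢
    rcases zmod2_cases (Multiplicative.toAdd x.right) with h1 | h1 <;>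
      rcases zmod2_cases (Multiplicative.toAdd y.right) with h2 | h2 <;>
      rw [h1] at hx <;> rw [h2] at hy <;> rw [h1, h2]
    · rw [if_pos rfl] at hx; rw [if_pos rfl] at hy
      rw [if_pos rfl, if_pos (by decide : (0 : ZMod 2) + 0 = 0)]
      exact mul_mem hx hy
    · rw [if_pos rfl] at hx; rw [if_neg (by decide)] at hy
      rw [if_pos rfl, if_neg (by decide : ¬((0 : ZMod 2) + 1 = 0)), mul_assoc]
      exact mul_mem hx hy
    · rw [if_neg (by decide)] at hx; rw [if_pos rfl] at hy
      rw [if_neg (by decide : ¬((1:ZMod 2) = 0)),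
        if_neg (by decide : ¬((1 : ZMod 2) + 0 = 0))]
      have : x.left * y.left⁻¹ * c⁻¹ = (x.left * c⁻¹) * y.left⁻¹ := by
        rw [mul_assoc, mul_comm y.left⁻¹ c⁻¹, ← mul_assoc]
      rw [this]
      exact mul_mem hx (inv_mem hy)
    · rw [if_neg (by decide)] at hx; rw [if_neg (by decide)] at hy
      rw [if_neg (by decide : ¬((1:ZMod 2) = 0)),
        if_pos (by decide : (1 : ZMod 2) + 1 = 0)]
      have : x.left * y.left⁻¹ = (x.left * c⁻¹) * (y.left * c⁻¹)⁻¹ := by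
        group
      rw [this]
      exact mul_mem hx (inv_mem hy)
  inv_mem' := by
    intro x hx
    simp only [Set.mem_setOf_eq, SemidirectProduct.inv_left, SemidirectProduct.inv_right,
      dihTwist_apply, toAdd_inv] at hx ⊢
    rcases zmod2_cases (Multiplicative.toAdd x.right) with h1 | h1
    · rw [h1] at hx
      rw [if_pos rfl] at hx
      simp only [h1, neg_zero]
      first
      | exact inv_mem hx
      | · rw [if_pos rfl, if_pos rfl]
          exact inv_mem hx
    · simp only [h1] at hx ⊢
      rw [if_neg (by decide)] at hx
      rw [if_neg (by decide : ¬(-(1:ZMod 2) = 0)), if_neg (by decide : ¬(-(1:ZMod 2) = 0)),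
        inv_inv]
      exact hx

end Aux

section Aux2

variable {A : Type*} [CommGroup A] [Fintype A]

lemma mem_dihSub {B : Subgroup A} {c : A} {x : Dih A} :
    x ∈ dihSub B c ↔ (if Multiplicative.toAdd x.right = 0 then x.left ∈ B
      else x.left * c⁻¹ ∈ B) := Iff.rfl

/-- The distinguished reflection `(1, τ)` of `Dih A`. -/
def dihT₀ : Dih A := ⟨1, Multiplicative.ofAdd 1⟩

lemma minGen_set_nonempty (G : Type*) [Group G] [Fintype G] :
    {n : ℕ | ∃ S : Finset G, S.card = n ∧ Subgroup.closure (S : Set G) = ⊤}.Nonempty := by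
  exact ⟨(Finset.univ : Finset G).card, Finset.univ, rfl, by simp⟩

lemma dih_upper : minGen (Dih A) ≤ minGen A + 1 := by
  classical
  obtain ⟨S, hcard, hgen⟩ := Nat.sInf_mem (minGen_set_nonempty A)
  set t₀ : Dih A := dihT₀ with ht₀
  have htnot : t₀ ∉ S.image (DihInl A) := by
    intro h
    obtain ⟨a, _, ha⟩ := Finset.mem_image.mp h
    have h2 : (DihInl A a).right = t₀.right := by rw [ha]
    have h3 : (1 : Multiplicative (ZMod 2)) = Multiplicative.ofAdd 1 := h2
    exact (by decide : ¬((1 : Multiplicative (ZMod 2)) = Multiplicative.ofAdd 1)) h3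
  refine Nat.sInf_le ⟨insert t₀ (S.image (DihInl A)), ?_, ?_⟩
  · rw [Finset.card_insert_of_notMem htnot,
      Finset.card_image_of_injective _ SemidirectProduct.inl_injective, hcard]
    rfl
  · rw [eq_top_iff]
    intro x _
    have hx1 : DihInl A x.left ∈ Subgroup.closure
        ((insert t₀ (S.image (DihInl A)) : Finset (Dih A)) : Set (Dih A)) := by
      have hmem : x.left ∈ Subgroup.closure (S : Set A) := by rw [hgen]; trivial
      have h4 := Subgroup.mem_map_of_mem (DihInl A) hmem
      rw [MonoidHom.map_closure] at h4
      refine Subgroup.closure_mono ?_ h4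
      intro y hy
      obtain ⟨a, ha, rfl⟩ := hy
      simp only [Finset.coe_insert, Set.mem_insert_iff, Finset.coe_image]
      exact Or.inr ⟨a, ha, rfl⟩
    have hx2 : t₀ ∈ Subgroup.closure
        ((insert t₀ (S.image (DihInl A)) : Finset (Dih A)) : Set (Dih A)) :=
      Subgroup.subset_closure (by simp)
    rcases zmod2_cases (Multiplicative.toAdd x.right) with h1 | h1
    · have hr : x.right = 1 := by
        have := congrArg Multiplicative.ofAdd h1
        simpa using this
      have hx : x = DihInl A x.left := by
        conv_lhs => rw [← SemidirectProduct.inl_left_mul_inr_right x]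
        rw [hr, map_one, mul_one]
      rw [hx]; exact hx1
    · have hr : x.right = Multiplicative.ofAdd 1 := by
        have := congrArg Multiplicative.ofAdd h1
        simpa using this
      have hx : x = DihInl A x.left * t₀ := by
        conv_lhs => rw [← SemidirectProduct.inl_left_mul_inr_right x]
        rw [hr]
        rfl
      rw [hx]; exact mul_mem hx1 hx2


lemma dih_lower : minGen A + 1 ≤ minGen (Dih A) := by
  classical
  obtain ⟨S, hcard, hgen⟩ := Nat.sInf_mem (minGen_set_nonempty (Dih A))
  have hex : ∃ t ∈ S, Multiplicative.toAdd t.right = 1 := by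
    by_contra h
    push_neg at h
    have hle : Subgroup.closure (S : Set (Dih A)) ≤
        (SemidirectProduct.rightHom : Dih A →* Multiplicative (ZMod 2)).ker := by
      rw [Subgroup.closure_le]
      intro s hs
      have h0 := h s hs
      rcases zmod2_cases (Multiplicative.toAdd s.right) with h1 | h1
      · have hr : s.right = 1 := by
          have := congrArg Multiplicative.ofAdd h1
          simpa using this
        show SemidirectProduct.rightHom s = 1
        rw [SemidirectProduct.rightHom_eq_right]
        exact hr
      · exact absurd h1 h0
    rw [hgen] at hle
    have h5 : SemidirectProduct.rightHom (dihT₀ : Dih A) = 1 :=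
      hle (Subgroup.mem_top _)
    rw [SemidirectProduct.rightHom_eq_right] at h5
    have h6 : (Multiplicative.ofAdd (1 : ZMod 2)) = 1 := h5
    exact (by decide : ¬(Multiplicative.ofAdd (1 : ZMod 2)
      = (1 : Multiplicative (ZMod 2)))) h6
  obtain ⟨t, htS, htr⟩ := hex
  set T₀ : Finset A := (S.erase t).image
    (fun s => if Multiplicative.toAdd s.right = 0 then s.left else s.left * t.left⁻¹)
    with hT₀
  set B : Subgroup A := Subgroup.closure (T₀ : Set A) with hB
  have hSH : (S : Set (Dih A)) ⊆ (dihSub B t.left : Set (Dih A)) := by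
    intro s hs
    by_cases hst : s = t
    · subst hst
      show s ∈ dihSub B s.left
      rw [mem_dihSub, if_neg (by rw [htr]; decide)]
      simpa using one_mem B
    · have hmemT : (if Multiplicative.toAdd s.right = 0 then s.left
          else s.left * t.left⁻¹) ∈ T₀ :=
        Finset.mem_image_of_mem _ (Finset.mem_erase.mpr ⟨hst, hs⟩)
      have hmemB : (if Multiplicative.toAdd s.right = 0 then s.left
          else s.left * t.left⁻¹) ∈ B := Subgroup.subset_closure hmemT
      show s ∈ dihSub B t.left
      rw [mem_dihSub]
      rcases zmod2_cases (Multiplicative.toAdd s.right) with h1 | h1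
      · rw [if_pos h1] at hmemB ⊢
        exact hmemB
      · rw [if_neg (by rw [h1]; decide)] at hmemB ⊢
        exact hmemB
  have htop : dihSub B t.left = ⊤ := by
    rw [eq_top_iff, ← hgen, Subgroup.closure_le]
    exact hSH
  have hBtop : B = ⊤ := by
    rw [eq_top_iff]
    intro a _
    have hmem : DihInl A a ∈ dihSub B t.left := htop ▸ Subgroup.mem_top _
    rw [mem_dihSub] at hmem
    have h0 : Multiplicative.toAdd ((DihInl A) a).right = 0 := rfl
    rw [if_pos h0] at hmem
    exact hmem
  have hminA : minGen A ≤ T₀.card := Nat.sInf_le ⟨T₀, rfl, hBtop⟩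
  have hcard1 : T₀.card ≤ (S.erase t).card := Finset.card_image_le
  have hcard2 : (S.erase t).card = S.card - 1 := Finset.card_erase_of_mem htS
  have hpos : 1 ≤ S.card := Finset.card_pos.mpr ⟨t, htS⟩
  have : minGen (Dih A) = S.card := hcard.symm
  omega

end Aux2

/-- For a finite abelian group `A`, `d(Dih(A)) = d(A) + 1`. -/
theorem minGen_dih (A : Type*) [CommGroup A] [Fintype A] :
    minGen (Dih A) = minGen A + 1 :=
  le_antisymm dih_upper dih_lower
end

section
/- Let G = Dih(A) where A is a finite abelian group of odd order with d(A) = 2, let I be an intersection subgroup of G of odd order, and suppose δ(I) = m with m ∈ {2, 3}. Then there exists g ∈ G such that δ(I ∪ {g}) = m − 1 and I ∪ {g} does not generate G and the smallest intersection subgroup ⌈I ∪ {g}⌉ containing I ∪ {g} has odd order. -/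
section Aux
open SemidirectProduct

variable {A : Type*} [CommGroup A]

/-- The index-2 subgroup `A` of `Dih A`, as the kernel of `rightHom`. -/
def DihKer (A : Type*) [CommGroup A] : Subgroup (Dih A) :=
  MonoidHom.ker (rightHom : Dih A →* Multiplicative (ZMod 2))

lemma mem_dihKer {x : Dih A} : x ∈ DihKer A ↔ rightHom x = 1 := Iff.rfl

lemma z2_mul_self {u : Multiplicative (ZMod 2)} (hu : u ≠ 1) : u * u = 1 := by
  revert hu; revert u; decide

lemma z2_mul_inv {u v : Multiplicative (ZMod 2)} (hu : u ≠ 1) (hv : v ≠ 1) :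
    u * v⁻¹ = 1 := by
  revert hu hv; revert u v; decide

lemma dih_sq {x : Dih A} (hx : rightHom x ≠ 1) : x * x = 1 := by
  rw [rightHom_eq_right] at hx
  have h2 : Multiplicative.toAdd x.right ≠ 0 := by
    intro h; apply hx
    have : x.right = Multiplicative.ofAdd 0 := by
      rw [← h]; rfl
    simpa using this
  have : x * x = ⟨x.left * (dihTwist A x.right) x.left, x.right * x.right⟩ := rfl
  have hr : x.right * x.right = 1 := z2_mul_self hx
  have hl : (dihTwist A x.right) x.left = x.left⁻¹ := by
    simp [dihTwist, h2, hx]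
  rw [this, hl, hr, mul_inv_cancel]
  rfl

lemma dih_conj {x y : Dih A} (hx : rightHom x ≠ 1) (hy : rightHom y = 1) :
    x * y * x⁻¹ = y⁻¹ := by
  rw [rightHom_eq_right] at hx hy
  have h2 : Multiplicative.toAdd x.right ≠ 0 := by
    intro h; apply hx
    have : x.right = Multiplicative.ofAdd 0 := by rw [← h]; rfl
    simpa using this
  have hxy : x * y = y⁻¹ * x := by
    ext
    · show x.left * (dihTwist A x.right) y.left
        = y⁻¹.left * (dihTwist A y⁻¹.right) x.left
      simp [dihTwist, h2, hx, inv_left, inv_right, hy, mul_comm]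
    · show x.right * y.right = y⁻¹.right * x.right
      simp [hy]
  rw [hxy, mul_assoc, mul_inv_cancel, mul_one]

end Aux
section Aux2
open SemidirectProduct

variable {A : Type*} [CommGroup A]

/-- If a subgroup contains `DihKer A` and one element outside it, it is all of `Dih A`. -/
lemma dihKer_top {H : Subgroup (Dih A)} (hle : DihKer A ≤ H) {x : Dih A}
    (hx : x ∈ H) (hxk : rightHom x ≠ 1) : H = ⊤ := by
  rw [eq_top_iff]
  intro y _
  by_cases hy : rightHom y = 1
  · exact hle hy
  · have : y * x⁻¹ ∈ DihKer A := by
      rw [mem_dihKer, map_mul, map_inv]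
      exact z2_mul_inv hy hxk
    have := mul_mem (hle this) hx
    rwa [inv_mul_cancel_right] at this

lemma dihKer_ne_top : (DihKer A) ≠ ⊤ := by
  intro h
  have : (inr (Multiplicative.ofAdd 1) : Dih A) ∈ DihKer A := h ▸ Subgroup.mem_top _
  rw [mem_dihKer, rightHom_inr] at this
  exact absurd this (by decide)

lemma dihKer_coatom : IsCoatom (DihKer A) := by
  constructor
  · exact dihKer_ne_top
  · intro K hK
    obtain ⟨x, hxK, hxk⟩ := SetLike.exists_of_lt hK
    exact dihKer_top hK.le hxK hxk

lemma card_dihKer [Fintype A] : Nat.card (DihKer A) = Nat.card A := by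
  have h := range_inl_eq_ker_rightHom (φ := dihTwist A)
  have : Nat.card ((inl : A →* Dih A).range) = Nat.card A :=
    Nat.card_congr (MulEquiv.toEquiv (MonoidHom.ofInjective inl_injective)).symm
  rw [DihKer, ← h, this]

/-- Odd-order subgroups of `Dih A` are contained in `DihKer A`. -/
lemma odd_le_dihKer {H : Subgroup (Dih A)} (h : Odd (Nat.card H)) : H ≤ DihKer A := by
  intro x hx
  by_contra hxk
  rw [mem_dihKer] at hxk
  have hsq : x * x = 1 := dih_sq hxk
  have hne : x ≠ 1 := by
    intro h1; apply hxk; rw [h1, map_one]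
  have hord : orderOf (⟨x, hx⟩ : H) = 2 := by
    apply orderOf_eq_prime
    · rw [pow_two]; exact Subtype.ext hsq
    · simpa using hne
  have hdvd : 2 ∣ Nat.card H := by
    have := orderOf_dvd_natCard (⟨x, hx⟩ : H)
    rwa [hord] at this
  rw [Nat.odd_iff] at h
  omega

/-- For a set `P ⊆ DihKer A`, the subgroup `⌈P⌉` has odd order. -/
lemma interCeil_odd [Fintype A] (hodd : Odd (Nat.card A)) {P : Set (Dih A)}
    (hP : P ⊆ (DihKer A : Set (Dih A))) : Odd (Nat.card (interCeil P)) := by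
  have hle : interCeil P ≤ DihKer A := sInf_le ⟨dihKer_coatom, hP⟩
  have hdvd : Nat.card (interCeil P) ∣ Nat.card (DihKer A) :=
    Subgroup.card_dvd_of_le hle
  rw [card_dihKer] at hdvd
  rcases Nat.even_or_odd (Nat.card (interCeil P)) with he | ho
  · exfalso
    have h2 : (2:ℕ) ∣ Nat.card A := dvd_trans (even_iff_two_dvd.mp he) hdvd
    rw [Nat.odd_iff] at hodd
    omega
  · exact ho

lemma deficiency_le {G : Type*} [Group G] {P : Set G} (Q : Finset G)
    (h : Subgroup.closure (P ∪ ↑Q) = ⊤) : deficiency P ≤ Q.card :=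
  Nat.sInf_le ⟨Q, rfl, h⟩

end Aux2
section Aux3
open SemidirectProduct

variable {A : Type*} [CommGroup A]

lemma z2_mul {u v : Multiplicative (ZMod 2)} (hu : u ≠ 1) (hv : v ≠ 1) :
    u * v = 1 := by
  revert hu hv; revert u v; decide

lemma z2_ne {u v : Multiplicative (ZMod 2)} (hu : u = 1) (hv : v ≠ 1) :
    u * v ≠ 1 := by
  revert hu hv; revert u v; decide

lemma z2_ne' {u v : Multiplicative (ZMod 2)} (hu : u ≠ 1) (hv : v = 1) :
    u * v ≠ 1 := by
  revert hu hv; revert u v; decide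

/-- Given a subgroup `B ≤ DihKer A` and a reflection `d`, the subset
`B ∪ B·d` is a subgroup of `Dih A`. -/
def dihCosetSub (B : Subgroup (Dih A)) (d : Dih A) (hB : B ≤ DihKer A)
    (hd : rightHom d ≠ 1) : Subgroup (Dih A) where
  carrier := {p | (if rightHom p = 1 then p else p * d) ∈ B}
  one_mem' := by
    simp only [Set.mem_setOf_eq, map_one, if_pos]
    exact one_mem B
  mul_mem' := by
    intro a b ha hb
    simp only [Set.mem_setOf_eq] at ha hb ⊢
    have hd2 : d * d = 1 := dih_sq hd
    have hdinv : d⁻¹ = d := inv_eq_of_mul_eq_one_right hd2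
    by_cases ha' : rightHom a = 1 <;> by_cases hb' : rightHom b = 1
    · rw [if_pos ha'] at ha; rw [if_pos hb'] at hb
      rw [if_pos (by rw [map_mul, ha', hb', one_mul])]
      exact mul_mem ha hb
    · rw [if_pos ha'] at ha; rw [if_neg hb'] at hb
      rw [if_neg (by rw [map_mul]; exact z2_ne ha' hb'), mul_assoc]
      exact mul_mem ha hb
    · rw [if_neg ha'] at ha; rw [if_pos hb'] at hb
      rw [if_neg (by rw [map_mul]; exact z2_ne' ha' hb')]
      have hconj : d * b * d = b⁻¹ := by
        have h := dih_conj hd hb'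
        rwa [hdinv] at h
      have e1 : a * b * d = (a * d) * (d * b * d) := by
        have : (a * d) * (d * b * d) = a * (d * d) * (b * d) := by group
        rw [this, hd2, mul_one, ← mul_assoc]
      rw [e1, hconj]
      exact mul_mem ha (inv_mem hb)
    · rw [if_neg ha'] at ha; rw [if_neg hb'] at hb
      rw [if_pos (by rw [map_mul]; exact z2_mul ha' hb')]
      have hb2 : b * b = 1 := dih_sq hb'
      have hbinv : b⁻¹ = b := inv_eq_of_mul_eq_one_right hb2
      have hdb : d * b ∈ B := by
        have : (b * d)⁻¹ ∈ B := inv_mem hb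
        rwa [mul_inv_rev, hbinv, hdinv] at this
      have e1 : a * b = (a * d) * (d * b) := by
        have : (a * d) * (d * b) = a * (d * d) * b := by group
        rw [this, hd2, mul_one]
      rw [e1]
      exact mul_mem ha hdb
  inv_mem' := by
    intro a ha
    simp only [Set.mem_setOf_eq] at ha ⊢
    by_cases ha' : rightHom a = 1
    · rw [if_pos ha'] at ha
      rw [if_pos (by rw [map_inv, ha', inv_one])]
      exact inv_mem ha
    · rw [if_neg ha'] at ha
      have ha2 : a * a = 1 := dih_sq ha'
      have hainv : a⁻¹ = a := inv_eq_of_mul_eq_one_right ha2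
      rw [if_neg (by rw [map_inv, inv_eq_one]; exact ha'), hainv]
      exact ha

lemma mem_dihCosetSub {B : Subgroup (Dih A)} {d : Dih A} {hB : B ≤ DihKer A}
    {hd : rightHom d ≠ 1} {p : Dih A} :
    p ∈ dihCosetSub B d hB hd ↔ (if rightHom p = 1 then p else p * d) ∈ B :=
  Iff.rfl

/-- Core computation: if `S ∪ {q₁, q₂}` generates `Dih A`, `S ⊆ A`, and
`g ∈ A`, `d ∉ A` are such that (the `B ∪ B·d`-conditions on) `q₁, q₂` hold,
then `⟨S ∪ {g}⟩ = A`. -/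
lemma closure_insert_eq_dihKer {S : Set (Dih A)} (hS : S ⊆ (DihKer A : Set (Dih A)))
    {g d q₁ q₂ : Dih A} (hg : rightHom g = 1) (hd : rightHom d ≠ 1)
    (hq1 : (if rightHom q₁ = 1 then q₁ else q₁ * d) ∈ Subgroup.closure (insert g S))
    (hq2 : (if rightHom q₂ = 1 then q₂ else q₂ * d) ∈ Subgroup.closure (insert g S))
    (htop : Subgroup.closure (S ∪ {q₁, q₂}) = ⊤) :
    Subgroup.closure (insert g S) = DihKer A := by
  set B := Subgroup.closure (insert g S) with hBdef
  have hB : B ≤ DihKer A := by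
    rw [hBdef]
    apply (Subgroup.closure_le _).mpr
    intro x hx
    rcases hx with rfl | hx
    · exact hg
    · exact hS hx
  set K := dihCosetSub B d hB hd with hKdef
  have hsub : S ∪ {q₁, q₂} ⊆ (K : Set (Dih A)) := by
    intro x hx
    rcases hx with hx | hx
    · have hx1 : rightHom x = 1 := hS hx
      rw [SetLike.mem_coe, mem_dihCosetSub, if_pos hx1]
      exact Subgroup.subset_closure (Set.mem_insert_of_mem _ hx)
    · rcases hx with rfl | hx
      · exact hq1
      · rw [Set.mem_singleton_iff] at hx
        subst hx
        exact hq2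
  have hKtop : K = ⊤ := by
    rw [eq_top_iff, ← htop]
    exact (Subgroup.closure_le _).mpr hsub
  apply le_antisymm hB
  intro x hx
  have hxK : x ∈ K := hKtop ▸ Subgroup.mem_top x
  have hx1 : rightHom x = 1 := hx
  rwa [mem_dihCosetSub, if_pos hx1] at hxK

end Aux3
section Aux4
open SemidirectProduct

lemma deficiency_eq_sInf {G : Type*} [Group G] (P : Set G) :
    deficiency P = sInf {n : ℕ | ∃ Q : Finset G, Q.card = n ∧
      Subgroup.closure (P ∪ ↑Q) = ⊤} := rfl

lemma deficiency_eq_one {G : Type*} [Group G] {P : Set G}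
    (h1 : ∃ Q : Finset G, Q.card = 1 ∧ Subgroup.closure (P ∪ ↑Q) = ⊤)
    (h0 : Subgroup.closure P ≠ ⊤) : deficiency P = 1 := by
  obtain ⟨Q, hQc, hQt⟩ := h1
  have hle : deficiency P ≤ 1 := hQc ▸ deficiency_le Q hQt
  have hmem := Nat.sInf_mem (⟨1, Q, hQc, hQt⟩ : Set.Nonempty
    {n : ℕ | ∃ Q : Finset G, Q.card = n ∧ Subgroup.closure (P ∪ ↑Q) = ⊤})
  rw [← deficiency_eq_sInf] at hmem
  obtain ⟨R, hRc, hRt⟩ := hmem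
  rcases Nat.eq_zero_or_pos (deficiency P) with h | h
  · exfalso
    rw [h, Finset.card_eq_zero] at hRc
    rw [hRc, Finset.coe_empty, Set.union_empty] at hRt
    exact h0 hRt
  · omega

lemma deficiency_eq_two {G : Type*} [Group G] {P : Set G}
    (h2 : ∃ Q : Finset G, Q.card = 2 ∧ Subgroup.closure (P ∪ ↑Q) = ⊤)
    (hlow : ∀ Q : Finset G, Q.card ≤ 1 → Subgroup.closure (P ∪ ↑Q) ≠ ⊤) :
    deficiency P = 2 := by
  obtain ⟨Q, hQc, hQt⟩ := h2
  have hle : deficiency P ≤ 2 := hQc ▸ deficiency_le Q hQt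
  have hmem := Nat.sInf_mem (⟨2, Q, hQc, hQt⟩ : Set.Nonempty
    {n : ℕ | ∃ Q : Finset G, Q.card = n ∧ Subgroup.closure (P ∪ ↑Q) = ⊤})
  rw [← deficiency_eq_sInf] at hmem
  obtain ⟨R, hRc, hRt⟩ := hmem
  rcases Nat.lt_or_ge (deficiency P) 2 with h | h
  · exact absurd hRt (hlow R (by omega))
  · omega

variable {A : Type*} [CommGroup A]

/-- All conclusions of the theorem, given that the closure is exactly `DihKer A`. -/
lemma result_of_ker [Fintype A] (hodd : Odd (Nat.card A)) {P : Set (Dih A)}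
    (h : Subgroup.closure P = DihKer A) :
    deficiency P = 1 ∧ Subgroup.closure P ≠ ⊤ ∧
      Odd (Nat.card (interCeil P)) := by
  have hPk : P ⊆ (DihKer A : Set (Dih A)) := by
    intro x hx
    have : x ∈ Subgroup.closure P := Subgroup.subset_closure hx
    rwa [h] at this
  have hnt : Subgroup.closure P ≠ ⊤ := by rw [h]; exact dihKer_ne_top
  refine ⟨?_, hnt, interCeil_odd hodd hPk⟩
  apply deficiency_eq_one _ hnt
  refine ⟨{inr (Multiplicative.ofAdd 1)}, Finset.card_singleton _, ?_⟩
  apply dihKer_top (x := inr (Multiplicative.ofAdd 1))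
  · rw [← h]
    exact Subgroup.closure_mono Set.subset_union_left
  · apply Subgroup.subset_closure
    simp
  · rw [rightHom_inr]
    decide

end Aux4

open SemidirectProduct

/-- Let `G = Dih(A)` with `A` a finite abelian group of odd order and
`d(A) = 2`. If `I` is an intersection subgroup of `G` of odd order with
`δ(I) = m ∈ {2, 3}`, then there exists `g ∈ G` with `δ(I ∪ {g}) = m - 1`
such that `I ∪ {g}` does not generate `G` and `⌈I ∪ {g}⌉` has odd order. -/
theorem dih_odd_smaller_odd_options (A : Type*) [CommGroup A] [Fintype A]
    (hodd : Odd (Nat.card A)) (hd : minGen A = 2)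
    (I : Subgroup (Dih A)) (hI : IsIntersectionSubgroup I)
    (hIodd : Odd (Nat.card I))
    (m : ℕ) (hm : deficiency (I : Set (Dih A)) = m) (hm23 : m = 2 ∨ m = 3) :
    ∃ g : Dih A, deficiency (insert g (I : Set (Dih A))) = m - 1 ∧
      Subgroup.closure (insert g (I : Set (Dih A))) ≠ ⊤ ∧
      Odd (Nat.card (interCeil (insert g (I : Set (Dih A))))) := by
  classical
  have hIle : I ≤ DihKer A := odd_le_dihKer hIodd
  have hIset : (I : Set (Dih A)) ⊆ (DihKer A : Set (Dih A)) := hIle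
  rcases hm23 with rfl | rfl
  · -- m = 2
    have hne : Set.Nonempty {n : ℕ | ∃ Q : Finset (Dih A), Q.card = n ∧
        Subgroup.closure ((I : Set (Dih A)) ∪ ↑Q) = ⊤} := by
      by_contra hc
      rw [Set.not_nonempty_iff_eq_empty] at hc
      have h0 : deficiency (I : Set (Dih A)) = 0 := by
        rw [deficiency_eq_sInf, hc, Nat.sInf_empty]
      omega
    have hmem := Nat.sInf_mem hne
    rw [← deficiency_eq_sInf, hm] at hmem
    obtain ⟨Q, hQc, hQt⟩ := hmem
    rw [Finset.card_eq_two] at hQc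
    obtain ⟨q₁, q₂, hqne, rfl⟩ := hQc
    rw [show ((↑({q₁, q₂} : Finset (Dih A)) : Set (Dih A))) = {q₁, q₂} by simp] at hQt
    by_cases h1 : rightHom q₁ = 1 <;> by_cases h2 : rightHom q₂ = 1
    · exfalso
      have hle : Subgroup.closure ((I : Set (Dih A)) ∪ {q₁, q₂}) ≤ DihKer A := by
        apply (Subgroup.closure_le _).mpr
        intro x hx
        rcases hx with hx | hx
        · exact hIset hx
        · rcases hx with rfl | hx
          · exact h1
          · rw [Set.mem_singleton_iff] at hx; subst hx; exact h2
      rw [hQt] at hle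
      exact dihKer_ne_top (top_le_iff.mp hle)
    · refine ⟨q₁, ?_⟩
      have hker := closure_insert_eq_dihKer hIset h1 h2 ?hq1 ?hq2 hQt
      case hq1 => rw [if_pos h1]; exact Subgroup.subset_closure (Set.mem_insert _ _)
      case hq2 => rw [if_neg h2, dih_sq h2]; exact one_mem _
      obtain ⟨d1, d2, d3⟩ := result_of_ker hodd hker
      exact ⟨by omega, d2, d3⟩
    · refine ⟨q₂, ?_⟩
      have hker := closure_insert_eq_dihKer hIset h2 h1 ?hq1 ?hq2 hQt
      case hq1 => rw [if_neg h1, dih_sq h1]; exact one_mem _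
      case hq2 => rw [if_pos h2]; exact Subgroup.subset_closure (Set.mem_insert _ _)
      obtain ⟨d1, d2, d3⟩ := result_of_ker hodd hker
      exact ⟨by omega, d2, d3⟩
    · refine ⟨q₁ * q₂, ?_⟩
      have hg : rightHom (q₁ * q₂) = 1 := by rw [map_mul]; exact z2_mul h1 h2
      have hker := closure_insert_eq_dihKer hIset hg h2 ?hq1 ?hq2 hQt
      case hq1 => rw [if_neg h1]; exact Subgroup.subset_closure (Set.mem_insert _ _)
      case hq2 => rw [if_neg h2, dih_sq h2]; exact one_mem _
      obtain ⟨d1, d2, d3⟩ := result_of_ker hodd hker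
      exact ⟨by omega, d2, d3⟩
  · -- m = 3
    have hne : Set.Nonempty {n : ℕ | ∃ S : Finset A, S.card = n ∧
        Subgroup.closure (S : Set A) = ⊤} := by
      by_contra hc
      rw [Set.not_nonempty_iff_eq_empty] at hc
      have h0 : minGen A = 0 := by
        rw [minGen, hc, Nat.sInf_empty]
      omega
    have hmem := Nat.sInf_mem hne
    rw [show sInf {n : ℕ | ∃ S : Finset A, S.card = n ∧
        Subgroup.closure (S : Set A) = ⊤} = minGen A from rfl, hd] at hmem
    obtain ⟨S, hSc, hSt⟩ := hmem
    rw [Finset.card_eq_two] at hSc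
    obtain ⟨a, b, hab, rfl⟩ := hSc
    rw [show ((↑({a, b} : Finset A) : Set A)) = {a, b} by simp] at hSt
    have hsub : insert (inl a) (I : Set (Dih A)) ⊆ (DihKer A : Set (Dih A)) := by
      intro x hx
      rcases hx with rfl | hx
      · exact rightHom_inl a
      · exact hIset hx
    have hclker : Subgroup.closure ({inl a, inl b} : Set (Dih A)) = DihKer A := by
      have h1 : ({inl a, inl b} : Set (Dih A)) = inl '' {a, b} := by
        simp [Set.image_insert_eq]
      rw [h1, ← MonoidHom.map_closure, hSt, ← MonoidHom.range_eq_map,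
        range_inl_eq_ker_rightHom]
      rfl
    have hle : Subgroup.closure (insert (inl a) (I : Set (Dih A))) ≤ DihKer A :=
      (Subgroup.closure_le _).mpr hsub
    refine ⟨inl a, ?_, ?_, ?_⟩
    · have hdef2 : deficiency (insert (inl a) (I : Set (Dih A))) = 2 := by
        apply deficiency_eq_two
        · have hblt : (inl b : Dih A) ≠ inr (Multiplicative.ofAdd 1) := by
            intro h
            have := congrArg rightHom h
            rw [rightHom_inl, rightHom_inr] at this
            exact absurd this (by decide)
          refine ⟨{inl b, inr (Multiplicative.ofAdd 1)}, ?_, ?_⟩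
          · rw [Finset.card_insert_of_notMem (by simpa using hblt),
              Finset.card_singleton]
          · apply dihKer_top (x := inr (Multiplicative.ofAdd 1))
            · rw [← hclker]
              apply Subgroup.closure_mono
              intro x hx
              rcases hx with rfl | hx
              · exact Set.mem_union_left _ (Set.mem_insert _ _)
              · rw [Set.mem_singleton_iff] at hx; subst hx
                apply Set.mem_union_right
                simp
            · apply Subgroup.subset_closure
              apply Set.mem_union_right
              simp
            · rw [rightHom_inr]; decide
        · intro Q' hQ'c hQ't
          have hdle : deficiency (I : Set (Dih A)) ≤ (insert (inl a) Q').card := by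
            apply deficiency_le
            rw [show (I : Set (Dih A)) ∪ ↑(insert (inl a) Q')
                = insert (inl a) (I : Set (Dih A)) ∪ ↑Q' by
              ext x
              simp only [Set.mem_union, Finset.coe_insert, Set.mem_insert_iff,
                SetLike.mem_coe, Finset.mem_coe]
              tauto]
            exact hQ't
          have hcard : (insert (inl a) Q').card ≤ Q'.card + 1 :=
            Finset.card_insert_le _ _
          omega
      omega
    · intro h
      rw [h] at hle
      exact dihKer_ne_top (top_le_iff.mp hle)
    · exact interCeil_odd hodd hsub
end
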